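/- Let X be a compact metric space, f_{0,∞} a sequence of continuous self-maps, A an increasing sequence of nonnegative integers, and σ the shift on sequences: σ(a_1,a_2,…) = (a_2,a_3,…). Then for every k ≥ 1, h_A(f_{0,∞}) = h_{σ^k(A)}(f_{0,∞}). -/

import Mathlib

open Filter Set MeasureTheory

/-- `nacomp f i n = f (i+n-1) ∘ ⋯ ∘ f i`, the `n`-fold composition of the
nonautonomous system starting at index `i`. -/
def nacomp {X : Type*} (f : ℕ → X → X) (i : ℕ) : ℕ → X → X
  | 0 => id
  | n + 1 => f (i + n) ∘ nacomp f i n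

/-- `E` is an `(n, ε, A)`-separated subset of `Λ` for the nonautonomous system `f`. -/
def IsSepSet {X : Type*} [PseudoMetricSpace X] (f : ℕ → X → X) (A : ℕ → ℕ) (n : ℕ)
    (ε : ℝ) (Λ : Set X) (E : Finset X) : Prop :=
  ↑E ⊆ Λ ∧ ∀ x ∈ E, ∀ y ∈ E, x ≠ y →
    ∃ j : Fin n, ε < dist (nacomp f 0 (A j) x) (nacomp f 0 (A j) y)

/-- `s_n(ε, A, f, Λ)`: maximal cardinality of an `(n,ε,A)`-separated subset of `Λ`. -/
noncomputable def maxSep {X : Type*} [PseudoMetricSpace X] (f : ℕ → X → X) (A : ℕ → ℕ)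
    (n : ℕ) (ε : ℝ) (Λ : Set X) : ℕ :=
  sSup {m | ∃ E : Finset X, IsSepSet f A n ε Λ E ∧ E.card = m}

/-- Topological sequence entropy of `f` on `Λ` along `A`, via separated sets:
`lim_{ε → 0} limsup_n (1/n) log s_n(ε,A,f,Λ)`, the limit realized as a supremum over `ε > 0`. -/
noncomputable def sepEnt {X : Type*} [PseudoMetricSpace X] (f : ℕ → X → X) (A : ℕ → ℕ)
    (Λ : Set X) : EReal :=
  ⨆ ε : {ε : ℝ // 0 < ε},
    limsup (fun n : ℕ => ((Real.log (maxSep f A n ε Λ) / n : ℝ) : EReal)) atTop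

/-- A finite open cover of the whole space. -/
def IsFinOpenCover {X : Type*} [TopologicalSpace X] (𝒜 : Finset (Set X)) : Prop :=
  (∀ u ∈ 𝒜, IsOpen u) ∧ ⋃₀ ↑𝒜 = (univ : Set X)

/-- A cell `⋂_j (f_0^{a_j})⁻¹ (u j)` of the join `⋁_{j} f_0^{-a_j} 𝒜`. -/
def seqCell {X : Type*} (f : ℕ → X → X) (A : ℕ → ℕ) (n : ℕ) (u : Fin n → Set X) : Set X :=
  ⋂ j : Fin n, nacomp f 0 (A j.1) ⁻¹' (u j)

/-- `N((⋁_{j=1}^n f_0^{-a_j} 𝒜)|_Λ)`: the minimal cardinality of a subfamily of the join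
cover whose union contains `Λ`. -/
noncomputable def coverN {X : Type*} (f : ℕ → X → X) (A : ℕ → ℕ) (n : ℕ) (Λ : Set X)
    (𝒜 : Finset (Set X)) : ℕ :=
  sInf {m | ∃ S : Finset (Fin n → Set X), (∀ u ∈ S, ∀ j, u j ∈ 𝒜) ∧
    (Λ ⊆ ⋃ u ∈ S, seqCell f A n u) ∧ S.card = m}

/-- `h_A(f, Λ, 𝒜)`, the sequence entropy of `f` on `Λ` relative to the open cover `𝒜`. -/
noncomputable def coverEntOf {X : Type*} (f : ℕ → X → X) (A : ℕ → ℕ) (Λ : Set X)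
    (𝒜 : Finset (Set X)) : EReal :=
  limsup (fun n : ℕ => ((Real.log (coverN f A n Λ 𝒜) / n : ℝ) : EReal)) atTop

/-- `h_A(f, Λ)`: topological sequence entropy via open covers. -/
noncomputable def coverEnt {X : Type*} [TopologicalSpace X] (f : ℕ → X → X) (A : ℕ → ℕ)
    (Λ : Set X) : EReal :=
  ⨆ 𝒜 : {𝒜 : Finset (Set X) // IsFinOpenCover 𝒜}, coverEntOf f A Λ 𝒜

/-- The supremum topological sequence entropy `h*(f) = sup_A h_A(f)`. -/
noncomputable def supSeqEnt {X : Type*} [PseudoMetricSpace X] (f : ℕ → X → X) : EReal :=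
  ⨆ A : {A : ℕ → ℕ // StrictMono A}, sepEnt f A univ

/-- The `n`-th compositions system `f_{0,∞}^n`, whose `k`-th map is `f_{kn}^n`. -/
def compSys {X : Type*} (f : ℕ → X → X) (n : ℕ) : ℕ → X → X :=
  fun k => nacomp f (k * n) n

/-- A finite measurable partition of the space. -/
def IsFinMeasPartition {X : Type*} [MeasurableSpace X] (P : Finset (Set X)) : Prop :=
  (∀ s ∈ P, MeasurableSet s) ∧ ((P : Set (Set X)).PairwiseDisjoint id) ∧
    ⋃₀ ↑P = (univ : Set X)

/-- `h_{A,μ}(f, P) = limsup (1/n) H_μ(⋁_{j=1}^n f_0^{-a_j} P)`. -/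
noncomputable def measSeqEntPart {X : Type*} [MeasurableSpace X] (μ : Measure X)
    (f : ℕ → X → X) (A : ℕ → ℕ) (P : Finset (Set X)) : EReal :=
  limsup (fun n : ℕ =>
    (((∑ u : Fin n → {s // s ∈ P},
        Real.negMulLog (μ (seqCell f A n (fun j => (u j : Set X)))).toReal) / n : ℝ) : EReal))
    atTop

/-- The measure-theoretic sequence entropy `h_{A,μ}(f)`. -/
noncomputable def measSeqEnt {X : Type*} [MeasurableSpace X] (μ : Measure X)
    (f : ℕ → X → X) (A : ℕ → ℕ) : EReal :=
  ⨆ P : {P : Finset (Set X) // IsFinMeasPartition P}, measSeqEntPart μ f A P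

/-- Covering dimension at most `d`: every finite open cover has a finite open refinement
of order at most `d + 1`. -/
def HasCovDimLE (X : Type*) [TopologicalSpace X] (d : ℕ) : Prop :=
  ∀ 𝒜 : Finset (Set X), IsFinOpenCover 𝒜 → ∃ ℬ : Finset (Set X), IsFinOpenCover ℬ ∧
    (∀ v ∈ ℬ, ∃ u ∈ 𝒜, v ⊆ u) ∧ ∀ x : X, ({v : Set X | v ∈ ℬ ∧ x ∈ v}).ncard ≤ d + 1

/-- The induced nonautonomous system `f̂` on the space of Borel probability measures,
carrying the Lévy–Prokhorov (Prohorov) metric: `f̂ n μ = (f n)_* μ`. -/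
noncomputable def inducedSys {X : Type*} [MeasurableSpace X] (f : ℕ → X → X)
    (hf : ∀ n, Measurable (f n)) :
    ℕ → LevyProkhorov (ProbabilityMeasure X) → LevyProkhorov (ProbabilityMeasure X) :=
  fun n μ => (LevyProkhorov.toMeasureEquiv (α := ProbabilityMeasure X)).symm
    (((LevyProkhorov.toMeasureEquiv (α := ProbabilityMeasure X)) μ).map (hf n).aemeasurable)

/-- Multi-sensitivity of a nonautonomous system. -/
def MultiSensitive {X : Type*} [PseudoMetricSpace X] (f : ℕ → X → X) : Prop :=
  ∃ δ : ℝ, 0 < δ ∧ ∀ (k : ℕ) (V : Fin k → Set X),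
    (∀ i, IsOpen (V i)) → (∀ i, (V i).Nonempty) →
      ∃ n : ℕ, 1 ≤ n ∧ ∀ i, δ < Metric.diam (nacomp f 0 n '' V i)

/-! Fix `ε > 0` and a finite `ε/2`-net of `M` points. An `(n + k, ε, A)`-separated set, cut
according to which net points lie near its first `k` orbit points, falls into at most `M ^ k`
pieces, each `(n, ε, σ^k A)`-separated; conversely every `(n, ε, σ^k A)`-separated set is
`(n + k, ε, A)`-separated. Hence `log s_{n+k}(A)` and `log s_n(σ^k A)` differ by at most
`k log M`, and since `log s_{n+k}(A) ≤ (n + k) log M`, after dividing by `n` and `n + k`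
respectively the two sequences differ by at most `k log M / n`, so their limsups agree. -/

open Topology

theorem EReal.limsup_coe_le_of_le_add {u v w : ℕ → ℝ} (hw : Tendsto w atTop (𝓝 0))
    (h : ∀ᶠ n in atTop, u n ≤ w n + v n) :
    limsup (fun n => (u n : EReal)) atTop ≤ limsup (fun n => (v n : EReal)) atTop := by
  have hw' : limsup (fun n => (w n : EReal)) atTop = 0 :=
    ((continuous_coe_real_ereal.tendsto 0).comp hw).limsup_eq
  calc limsup (fun n => (u n : EReal)) atTop
      ≤ limsup ((fun n => (w n : EReal)) + fun n => (v n : EReal)) atTop :=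
        limsup_le_limsup (h.mono fun n hn => by
          simp only [Pi.add_apply]; exact_mod_cast hn)
    _ ≤ limsup (fun n => (w n : EReal)) atTop + limsup (fun n => (v n : EReal)) atTop :=
        EReal.limsup_add_le (.inl (by simp [hw'])) (.inl (by simp [hw']))
    _ = limsup (fun n => (v n : EReal)) atTop := by rw [hw', zero_add]

theorem EReal.limsup_coe_eq_of_abs_sub_le {u v w : ℕ → ℝ} (hw : Tendsto w atTop (𝓝 0))
    (h : ∀ᶠ n in atTop, |u n - v n| ≤ w n) :
    limsup (fun n => (u n : EReal)) atTop = limsup (fun n => (v n : EReal)) atTop :=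
  le_antisymm
    (EReal.limsup_coe_le_of_le_add hw (h.mono fun n hn => by linarith [le_abs_self (u n - v n)]))
    (EReal.limsup_coe_le_of_le_add hw (h.mono fun n hn => by linarith [neg_abs_le (u n - v n)]))

theorem Real.log_natCast_le_mul_log_add {p q M k : ℕ} (h : p ≤ M ^ k * q) :
    Real.log p ≤ k * Real.log M + Real.log q := by
  rcases p.eq_zero_or_pos with rfl | hp
  · simp only [Nat.cast_zero, Real.log_zero]
    exact add_nonneg (mul_nonneg k.cast_nonneg (Real.log_natCast_nonneg M))
      (Real.log_natCast_nonneg q)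
  have hMq : 0 < M ^ k * q := hp.trans_le h
  have hMk : ((M ^ k : ℕ) : ℝ) ≠ 0 := by exact_mod_cast (Nat.pos_of_mul_pos_right hMq).ne'
  have hq : (q : ℝ) ≠ 0 := by exact_mod_cast (Nat.pos_of_mul_pos_left hMq).ne'
  calc Real.log p ≤ Real.log ((M ^ k : ℕ) * q : ℝ) :=
        Real.log_le_log (by exact_mod_cast hp) (by exact_mod_cast h)
    _ = k * Real.log M + Real.log q := by
        rw [Real.log_mul hMk hq, Nat.cast_pow, Real.log_pow]

theorem abs_div_add_sub_div_le {a b L n k : ℝ} (hb : 0 ≤ b) (hba : b ≤ a) (hab : a ≤ k * L + b)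
    (ha : a ≤ (n + k) * L) (hn : 0 < n) (hk : 0 ≤ k) :
    |a / (n + k) - b / n| ≤ k * L / n := by
  have hnk : 0 < n + k := by linarith
  rw [abs_sub_le_iff, div_sub_div _ _ hnk.ne' hn.ne', div_sub_div _ _ hn.ne' hnk.ne',
    div_le_div_iff₀ (by positivity) hn, div_le_div_iff₀ (by positivity) hn]
  have hL : 0 ≤ L := nonneg_of_mul_nonneg_right (by linarith) hnk
  constructor
  · nlinarith [mul_nonneg (mul_nonneg hk hk) hL, mul_nonneg (mul_nonneg hk hb) hn.le,
      mul_nonneg (sub_nonneg.2 hab) (mul_pos hn hn).le]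
  · nlinarith [mul_nonneg (mul_nonneg hk hn.le) (sub_nonneg.2 ha),
      mul_nonneg (mul_nonneg hn.le hn.le) (sub_nonneg.2 hba)]

section SeparatedSets

variable {X : Type*} [PseudoMetricSpace X] {f : ℕ → X → X} {A : ℕ → ℕ} {n k m : ℕ} {ε : ℝ}
  {Λ : Set X} {E : Finset X}

theorem IsSepSet.card_le_one (hE : IsSepSet f A 0 ε Λ E) : E.card ≤ 1 :=
  Finset.card_le_one.2 fun x hx y hy =>
    by_contra fun hxy => (hE.2 x hx y hy hxy).elim fun j _ => j.elim0

theorem IsSepSet.of_reindex {B : ℕ → ℕ} (hE : IsSepSet f A n ε Λ E)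
    (hAB : ∀ j : Fin n, ∃ j' : Fin m, B j' = A j) : IsSepSet f B m ε Λ E := by
  refine ⟨hE.1, fun x hx y hy hxy => ?_⟩
  obtain ⟨j, hj⟩ := hE.2 x hx y hy hxy
  obtain ⟨j', hj'⟩ := hAB j
  exact ⟨j', hj' ▸ hj⟩

theorem isSepSet_empty : IsSepSet f A n ε Λ ∅ :=
  ⟨by simp, by simp⟩

variable {t : Finset X} (hnet : ∀ y, ∃ c ∈ t, dist y c < ε / 2)
include hnet

theorem IsSepSet.card_le_pow_mul (hE : IsSepSet f A (n + k) ε Λ E)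
    (hfib : ∀ F ⊆ E, IsSepSet f (fun i => A (i + k)) n ε Λ F → F.card ≤ m) :
    E.card ≤ t.card ^ k * m := by
  classical
  choose c hct hc using hnet
  set code : X → Fin k → X := fun x j => c (nacomp f 0 (A j) x)
  have hcode : ∀ x ∈ E, code x ∈ Fintype.piFinset fun _ => t :=
    fun x _ => Fintype.mem_piFinset.2 fun j => hct _
  have hfiber (y : Fin k → X) : IsSepSet f (fun i => A (i + k)) n ε Λ (E.filter (code · = y)) := by
    refine ⟨(Finset.coe_subset.2 (Finset.filter_subset _ _)).trans hE.1, fun x hx z hz hxz => ?_⟩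
    obtain ⟨hxE, hxy⟩ := Finset.mem_filter.1 hx
    obtain ⟨hzE, hzy⟩ := Finset.mem_filter.1 hz
    obtain ⟨j, hj⟩ := hE.2 x hxE z hzE hxz
    by_cases hjk : j.1 < k
    · have hsame : c (nacomp f 0 (A j) x) = c (nacomp f 0 (A j) z) :=
        congrFun (hxy.trans hzy.symm) ⟨j, hjk⟩
      have := dist_triangle_right (nacomp f 0 (A j) x) (nacomp f 0 (A j) z)
        (c (nacomp f 0 (A j) z))
      linarith [hc (nacomp f 0 (A j) x), hc (nacomp f 0 (A j) z), hsame ▸ hc (nacomp f 0 (A j) x)]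
    · refine ⟨⟨j - k, by omega⟩, ?_⟩
      simpa [Nat.sub_add_cancel (not_lt.1 hjk)] using hj
  calc E.card = ∑ y ∈ Fintype.piFinset fun _ => t, (E.filter (code · = y)).card :=
        Finset.card_eq_sum_card_fiberwise hcode
    _ ≤ ∑ _y ∈ Fintype.piFinset fun _ : Fin k => t, m :=
        Finset.sum_le_sum fun y _ => hfib _ (Finset.filter_subset _ _) (hfiber y)
    _ = t.card ^ k * m := by simp

theorem IsSepSet.card_le_pow (hE : IsSepSet f A n ε Λ E) : E.card ≤ t.card ^ n := by
  have hE' : IsSepSet f A (0 + n) ε Λ E := by rwa [zero_add]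
  simpa using hE'.card_le_pow_mul hnet fun F _ hF => hF.card_le_one

theorem bddAbove_card_isSepSet : BddAbove {m | ∃ E, IsSepSet f A n ε Λ E ∧ E.card = m} :=
  ⟨t.card ^ n, by rintro m ⟨E, hE, rfl⟩; exact hE.card_le_pow hnet⟩

theorem IsSepSet.card_le_maxSep (hE : IsSepSet f A n ε Λ E) : E.card ≤ maxSep f A n ε Λ :=
  le_csSup (bddAbove_card_isSepSet hnet) ⟨E, hE, rfl⟩

theorem exists_isSepSet_card_eq_maxSep : ∃ E, IsSepSet f A n ε Λ E ∧ E.card = maxSep f A n ε Λ :=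
  Nat.sSup_mem (s := {m | ∃ E, IsSepSet f A n ε Λ E ∧ E.card = m}) ⟨0, ∅, isSepSet_empty, rfl⟩
    (bddAbove_card_isSepSet hnet)

theorem maxSep_le_pow : maxSep f A n ε Λ ≤ t.card ^ n := by
  obtain ⟨E, hE, hcard⟩ := exists_isSepSet_card_eq_maxSep (f := f) (A := A) (n := n) (Λ := Λ) hnet
  exact hcard ▸ hE.card_le_pow hnet

theorem maxSep_shift_le : maxSep f (fun i => A (i + k)) n ε Λ ≤ maxSep f A (n + k) ε Λ := by
  obtain ⟨E, hE, hcard⟩ :=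
    exists_isSepSet_card_eq_maxSep (f := f) (A := fun i => A (i + k)) (n := n) (Λ := Λ) hnet
  exact hcard ▸ (hE.of_reindex fun j => ⟨⟨j + k, by omega⟩, rfl⟩).card_le_maxSep hnet

theorem maxSep_le_pow_mul_maxSep_shift :
    maxSep f A (n + k) ε Λ ≤ t.card ^ k * maxSep f (fun i => A (i + k)) n ε Λ := by
  obtain ⟨E, hE, hcard⟩ :=
    exists_isSepSet_card_eq_maxSep (f := f) (A := A) (n := n + k) (Λ := Λ) hnet
  exact hcard ▸ hE.card_le_pow_mul hnet fun F _ hF => hF.card_le_maxSep hnet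

end SeparatedSets

theorem limsup_log_maxSep_shift {X : Type*} [PseudoMetricSpace X] [CompactSpace X]
    (f : ℕ → X → X) (A : ℕ → ℕ) (k : ℕ) {ε : ℝ} (hε : 0 < ε) :
    limsup (fun n : ℕ => ((Real.log (maxSep f A n ε univ) / n : ℝ) : EReal)) atTop =
      limsup (fun n : ℕ =>
        ((Real.log (maxSep f (fun i => A (i + k)) n ε univ) / n : ℝ) : EReal)) atTop := by
  obtain ⟨s, -, hs, hcover⟩ :=
    finite_cover_balls_of_compact (isCompact_univ (X := X)) (half_pos hε)
  have hnet : ∀ y, ∃ c ∈ hs.toFinset, dist y c < ε / 2 := fun y => by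
    simpa using hcover (mem_univ y)
  set L := Real.log hs.toFinset.card
  rw [← limsup_nat_add _ k]
  refine EReal.limsup_coe_eq_of_abs_sub_le (w := fun n => k * L / n)
    (by simpa using (tendsto_const_div_atTop_nhds_zero_nat (k * L))) ?_
  filter_upwards [eventually_gt_atTop 0] with n hn
  push_cast
  refine abs_div_add_sub_div_le (Real.log_natCast_nonneg _) ?_ ?_ ?_ (by exact_mod_cast hn)
    k.cast_nonneg
  · simpa using Real.log_natCast_le_mul_log_add (M := 1) (k := 0)
      (by simpa using maxSep_shift_le (A := A) (n := n) (k := k) hnet)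
  · exact Real.log_natCast_le_mul_log_add (maxSep_le_pow_mul_maxSep_shift hnet)
  · have := Real.log_natCast_le_mul_log_add (q := 1)
      (by simpa using maxSep_le_pow (f := f) (A := A) (n := n + k) (Λ := univ) hnet)
    simpa using this

theorem sepEnt_shift_seq_general {X : Type*} [MetricSpace X] [CompactSpace X]
    (f : ℕ → X → X)
    (A : ℕ → ℕ) (k : ℕ) :
    sepEnt f A univ = sepEnt f (fun i => A (i + k)) univ :=
  iSup_congr fun ε => limsup_log_maxSep_shift f A k ε.2

/-- Sequence entropy is invariant under shifting the sequence: `h_A(f) = h_{σ^k A}(f)`. -/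
theorem sepEnt_shift_seq {X : Type*} [MetricSpace X] [CompactSpace X]
    (f : ℕ → X → X) (hf : ∀ n, Continuous (f n))
    (A : ℕ → ℕ) (hA : StrictMono A) (k : ℕ) (hk : 1 ≤ k) :
    sepEnt f A univ = sepEnt f (fun i => A (i + k)) univ :=
  sepEnt_shift_seq_general f A k
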